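/- arXiv:2112.02765 — 2 statements merged into one kernel-verified Lean document; each statement's English description precedes it below -/
import Mathlib

section
/- Let h : I → ℝ be a map on a compact interval I with positive derivative. If h is C^{1+α} smooth (0 < α ≤ 1), then there is a constant C such that |ξ_h(J)| ≤ C·|J|^α for every closed interval J ⊆ I. Moreover, if h is C² smooth, then |ξ_h(J)| = o(|J|) as |J| → 0; that is, for every ε > 0 there exists δ > 0 such that every closed interval J ⊆ I with |J| < δ satisfies |ξ_h(J)| ≤ ε·|J|. -/
open Set Filter MeasureTheory
open scoped Topology ENNReal NNReal

noncomputable section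

/-- The rotation (translation) number of a lift of a circle homeomorphism. -/
def rot (f : CircleDeg1Lift) : ℝ := f.translationNumber

/-- `x` lies in the integer-translation orbit of the break point `p`. -/
def IsBreakPt (p x : ℝ) : Prop := ∃ k : ℤ, x = p + (k : ℝ)

/-- `f` has a break at `p`: one-sided derivatives exist, are positive, with ratio `c`. -/
def HasBreakAt (f : ℝ → ℝ) (p c : ℝ) : Prop :=
  ∃ dL dR : ℝ, 0 < dL ∧ 0 < dR ∧ dL / dR = c ∧
    HasDerivWithinAt f dL (Set.Iio p) p ∧ HasDerivWithinAt f dR (Set.Ioi p) p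

/-- The class `B^r(p,c)` of circle homeomorphisms (given by their lifts): `C^r` with
positive derivative away from the break orbit, with break of size `c` at `p`. -/
def BreakClass (f : CircleDeg1Lift) (r : ℕ) (p c : ℝ) : Prop :=
  StrictMono ⇑f ∧ Continuous ⇑f ∧
    (∀ x : ℝ, ¬ IsBreakPt p x → ContDiffAt ℝ r ⇑f x ∧ 0 < deriv ⇑f x) ∧
    HasBreakAt ⇑f p c

/-- The class `B^ω(p,c)`: analytic away from the break orbit. -/
def BreakClassOmega (f : CircleDeg1Lift) (p c : ℝ) : Prop :=
  StrictMono ⇑f ∧ Continuous ⇑f ∧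
    (∀ x : ℝ, ¬ IsBreakPt p x → AnalyticAt ℝ ⇑f x ∧ 0 < deriv ⇑f x) ∧
    HasBreakAt ⇑f p c

/-- The class `B^{2+}(p,c) = ⋃_{ε>0} B^{2+ε}(p,c)`: `C²` away from the break with
`ε`-Hölder second derivative for some `ε > 0`. -/
def BreakClass2Plus (f : CircleDeg1Lift) (p c : ℝ) : Prop :=
  BreakClass f 2 p c ∧
    ∃ ε > (0:ℝ), ∃ C : ℝ, ∀ x ∈ Set.Ioo p (p+1), ∀ y ∈ Set.Ioo p (p+1),
      |deriv (deriv ⇑f) x - deriv (deriv ⇑f) y| ≤ C * |x - y| ^ ε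

/-- Iterates of the Gauss map on the fractional part of `ρ`. -/
def gaussIter (ρ : ℝ) : ℕ → ℝ
  | 0 => Int.fract ρ
  | n+1 => Int.fract (gaussIter ρ n)⁻¹

/-- The partial quotients `a_n` (`n ≥ 1`) of the continued fraction of `ρ`. -/
def cfA (ρ : ℝ) (n : ℕ) : ℕ := ⌊(gaussIter ρ (n-1))⁻¹⌋₊

/-- The denominators `q_n` of the continued fraction convergents of `ρ`. -/
def cfQ (ρ : ℝ) : ℕ → ℕ
  | 0 => 1
  | 1 => cfA ρ 1
  | n+2 => cfA ρ (n+2) * cfQ ρ (n+1) + cfQ ρ n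

/-- The numerators `p_n` of the continued fraction convergents of `ρ`. -/
def cfP (ρ : ℝ) : ℕ → ℤ
  | 0 => ⌊ρ⌋
  | 1 => cfA ρ 1 * ⌊ρ⌋ + 1
  | n+2 => cfA ρ (n+2) * cfP ρ (n+1) + cfP ρ n

/-- `μ_n = |q_n ρ − p_n|`, the invariant measure of the arcs `Δ_n^k`. -/
def cfMu (ρ : ℝ) (n : ℕ) : ℝ := |(cfQ ρ n : ℝ) * ρ - (cfP ρ n : ℝ)|

/-- The endpoint `f^{q_n}(p) − p_n` of the fundamental arc `Δ_n^0 = [p .. f^{q_n}(p)]`. -/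
def dynEnd (f : CircleDeg1Lift) (p : ℝ) (n : ℕ) : ℝ :=
  (f ^ cfQ (rot f) n) p - (cfP (rot f) n : ℝ)

/-- The arc `Δ_n^k = f^k(Δ_n^0)` of the dynamical partition, as a subset of `ℝ`. -/
def dynArc (f : CircleDeg1Lift) (p : ℝ) (n k : ℕ) : Set ℝ :=
  ⇑(f ^ k) '' Set.uIcc p (dynEnd f p n)

/-- The length `|Δ_n^k|`. -/
def dynLen (f : CircleDeg1Lift) (p : ℝ) (n k : ℕ) : ℝ :=
  |(f ^ k) (dynEnd f p n) - (f ^ k) p|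

/-- Projection from `ℝ` to the circle `ℝ/ℤ`. -/
def circProj : ℝ → AddCircle (1 : ℝ) := QuotientAddGroup.mk

/-- Containment of arcs regarded on the circle. -/
def arcSubset (A B : Set ℝ) : Prop := circProj '' A ⊆ circProj '' B

/-- The signed length of `Δ_n^0`. -/
def dynDelta (f : CircleDeg1Lift) (p : ℝ) (n : ℕ) : ℝ := dynEnd f p n - p

/-- `α_n = |Δ_n^0| / |Δ_{n−1}^0|`. -/
def alphaRatio (f : CircleDeg1Lift) (p : ℝ) (n : ℕ) : ℝ :=
  |dynDelta f p n| / |dynDelta f p (n - 1)|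

/-- The renormalization `f_n = A_n⁻¹ ∘ f^{q_n} ∘ A_n`, in the affine chart `A_n`
sending `0 ↦ p` and `−1 ↦ f^{q_{n−1}}(p)`. -/
def renF (f : CircleDeg1Lift) (p : ℝ) (n : ℕ) (z : ℝ) : ℝ :=
  (p - ((f ^ cfQ (rot f) n) (p - z * dynDelta f p (n-1)) - (cfP (rot f) n : ℝ))) /
    dynDelta f p (n-1)

/-- The renormalization `g_n = A_n⁻¹ ∘ f^{q_{n−1}} ∘ A_n`. -/
def renG (f : CircleDeg1Lift) (p : ℝ) (n : ℕ) (z : ℝ) : ℝ :=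
  (p - ((f ^ cfQ (rot f) (n-1)) (p - z * dynDelta f p (n-1)) - (cfP (rot f) (n-1) : ℝ))) /
    dynDelta f p (n-1)

/-- The map `h_n`: `f^{q_n}` written in the affine chart `w` with `w(x₀) = 0`,
`w(f^{q_{n−1}}(x₀)) = −1`, for an arbitrary base point `x₀`. -/
def renH (f : CircleDeg1Lift) (x₀ : ℝ) (n : ℕ) (w : ℝ) : ℝ :=
  (x₀ - ((f ^ cfQ (rot f) n)
      (x₀ - w * ((f ^ cfQ (rot f) (n-1)) x₀ - (cfP (rot f) (n-1) : ℝ) - x₀)) -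
    (cfP (rot f) n : ℝ))) /
  ((f ^ cfQ (rot f) (n-1)) x₀ - (cfP (rot f) (n-1) : ℝ) - x₀)

/-- `c_n = c^{(−1)^n}`. -/
def cSeq (c : ℝ) (n : ℕ) : ℝ := if Even n then c else c⁻¹

/-- Second derivative within a set. -/
def d2Within (F : ℝ → ℝ) (s : Set ℝ) (z : ℝ) : ℝ := derivWithin (derivWithin F s) s z

/-- `ln (Rf_m)'` as a function on the fundamental interval `[−1, α_m]` of the
renormalized circle, taking the `f_m`-branch on `[−1,0]` and the `g_m`-branch on `(0, α_m]`. -/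
def renPhi (f : CircleDeg1Lift) (p : ℝ) (m : ℕ) (z : ℝ) : ℝ :=
  if z ≤ 0 then Real.log (derivWithin (renF f p m) (Set.Icc (-1:ℝ) 0) z)
  else Real.log (derivWithin (renG f p m) (Set.Icc (0:ℝ) (alphaRatio f p m)) z)

/-- The cross-ratio distortion `ξ_f([a,b]) = ln f'(a) + ln f'(b) − 2 ln ((f b − f a)/(b − a))`. -/
def xi (f : ℝ → ℝ) (a b : ℝ) : ℝ :=
  Real.log (deriv f a) + Real.log (deriv f b) - 2 * Real.log ((f b - f a) / (b - a))

/-- The cross-ratio distortion computed with one-sided (within `s`) derivatives. -/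
def xiOn (f : ℝ → ℝ) (s : Set ℝ) (a b : ℝ) : ℝ :=
  Real.log (derivWithin f s a) + Real.log (derivWithin f s b) -
    2 * Real.log ((f b - f a) / (b - a))

/-- The Schwarzian derivative `S(f) = f'''/f' − (3/2)(f''/f')²`. -/
def schwarzian (f : ℝ → ℝ) (x : ℝ) : ℝ :=
  iteratedDeriv 3 f x / deriv f x - (3/2) * (iteratedDeriv 2 f x / deriv f x) ^ 2

/-- `g` is fractional linear (Möbius) on the fundamental interval `(p, p+1)`. -/
def IsMobiusOn (g : ℝ → ℝ) (p : ℝ) : Prop :=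
  ∃ a b c d : ℝ, a * d - b * c ≠ 0 ∧
    ∀ x ∈ Set.Ioo p (p + 1), c * x + d ≠ 0 ∧ g x = (a * x + b) / (c * x + d)

/-- `h` is `C^{1+α}`: continuously differentiable with `α`-Hölder derivative. -/
def C1Holder (h : ℝ → ℝ) (α : ℝ) : Prop :=
  ContDiff ℝ 1 h ∧ ∃ C : ℝ, ∀ x y : ℝ, |deriv h x - deriv h y| ≤ C * |x - y| ^ α

/-- `h` is (a lift of) an orientation-preserving `C^{1+α}` circle diffeomorphism. -/
def IsC1HolderDiffeo (h : CircleDeg1Lift) (α : ℝ) : Prop :=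
  C1Holder ⇑h α ∧ ∀ x : ℝ, 0 < deriv ⇑h x

/-- `h` is (a lift of) an orientation-preserving `C²` circle diffeomorphism. -/
def IsC2Diffeo (h : CircleDeg1Lift) : Prop :=
  ContDiff ℝ 2 ⇑h ∧ ∀ x : ℝ, 0 < deriv ⇑h x

/-- A piecewise differentiable circle homeomorphism (given by its lift). -/
def PiecewiseDiffCircle (f : CircleDeg1Lift) : Prop :=
  StrictMono ⇑f ∧ Continuous ⇑f ∧
    ∃ s : Finset ℝ, ∀ x : ℝ, (∀ a ∈ s, ∀ k : ℤ, x ≠ a + (k : ℝ)) →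
      DifferentiableAt ℝ ⇑f x ∧ 0 < deriv ⇑f x

/-- The Möbius map `F_{α,v,c}(z) = (α + √c z)/(1 − v z)`. -/
def mobF (α v c : ℝ) (z : ℝ) : ℝ := (α + Real.sqrt c * z) / (1 - v * z)

/-- The Möbius map `G_{α,v,c}(z) = α(z − √c)/(α√c + z(1 + v − √c))`. -/
def mobG (α v c : ℝ) (z : ℝ) : ℝ :=
  α * (z - Real.sqrt c) / (α * Real.sqrt c + z * (1 + v - Real.sqrt c))

/-- The parameter domain `U_c`. -/
def Ucal (c : ℝ) : Set (ℝ × ℝ) :=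
  if 1 < c then Set.Icc 0 (Real.sqrt c) ×ˢ Set.Icc ((Real.sqrt c - 1)/2) (Real.sqrt c - 1)
  else Set.Icc 0 (Real.sqrt c) ×ˢ Set.Icc (Real.sqrt c - 1) ((Real.sqrt c - 1)/2)

/-- The lift to `ℝ` (periodic with period `1 + α`) of the circle homeomorphism
`T_{α,v,c}` of `[−1,α]/(−1 ∼ α)`, equal to `F_{α,v,c}` on `[−1,0]` and `G_{α,v,c}` on `[0,α]`. -/
def Tlift (α v c : ℝ) (x : ℝ) : ℝ :=
  (if x - ⌊(x + 1) / (1 + α)⌋ * (1 + α) ≤ 0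
    then mobF α v c (x - ⌊(x + 1) / (1 + α)⌋ * (1 + α))
    else mobG α v c (x - ⌊(x + 1) / (1 + α)⌋ * (1 + α)) + (1 + α)) +
  ⌊(x + 1) / (1 + α)⌋ * (1 + α)

/-- `T_{α,v,c}` has rotation number `ρ` (normalized by the circumference `1 + α`). -/
def TliftRotation (α v c ρ : ℝ) : Prop :=
  ∀ x : ℝ, Filter.Tendsto (fun n : ℕ => ((Tlift α v c)^[n] x - x) / ((1 + α) * n))
    Filter.atTop (nhds ρ)


/-!
Write `L = log h'`. By the mean value theorem the slope of `h` on `[a, b]` equals `h'(c)` for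
some `c ∈ (a, b)`, so `ξ_h([a, b]) = (L a - L c) + (L b - L c)`; since `h'` is bounded below
on the compact interval, `L` is as Hölder as `h'` is, which gives the `O(|J|^α)` bound.

For `C²` maps split at the midpoint `c = (a + b) / 2` instead:
`ξ_h([a, b]) = (L a + L b - 2 L c) + 2 (L c - log ((h b - h a) / (b - a)))`.
In the first bracket the linear terms of the expansions of `L` about `c` cancel; in the second,
`h b - h a - h'(c) (b - a) = o((b - a)²)` because the quadratic terms of the expansions of `h`
about `c` cancel. Uniform continuity of `L'` and `h''` makes all remainders uniform.
-/

open Set Real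

theorem abs_log_sub_log_le_div {m u v : ℝ} (hm : 0 < m) (hu : m ≤ u) (hv : m ≤ v) :
    |log u - log v| ≤ |u - v| / m := by
  have hlog : ∀ x ∈ Ici m, HasDerivWithinAt log x⁻¹ (Ici m) x := fun x hx =>
    (hasDerivAt_log (hm.trans_le hx).ne').hasDerivWithinAt
  have hbound : ∀ x ∈ Ici m, ‖x⁻¹‖ ≤ m⁻¹ := fun x hx => by
    rw [norm_inv, Real.norm_of_nonneg (hm.le.trans hx)]
    exact inv_anti₀ hm hx
  simpa [div_eq_inv_mul] using
    (convex_Ici m).norm_image_sub_le_of_norm_hasDerivWithin_le hlog hbound hv hu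

theorem exists_derivWithin_eq_slope_of_Icc_subset {s : Set ℝ} {F : ℝ → ℝ}
    (hF : DifferentiableOn ℝ F s) {a b : ℝ} (hab : a < b) (hsub : Icc a b ⊆ s) :
    ∃ c ∈ Ioo a b, derivWithin F s c = (F b - F a) / (b - a) := by
  refine exists_hasDerivAt_eq_slope F (derivWithin F s) hab (hF.continuousOn.mono hsub)
    fun x hx => ?_
  have hxs : s ∈ 𝓝 x :=
    mem_interior_iff_mem_nhds.mp (interior_mono hsub (by rwa [interior_Icc]))
  exact (hF x (hsub (Ioo_subset_Icc_self hx))).hasDerivWithinAt.hasDerivAt hxs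

theorem abs_xiOn_le_of_holder {s : Set ℝ} {h : ℝ → ℝ} {m K α : ℝ}
    (hh : DifferentiableOn ℝ h s) (hm : 0 < m) (hmin : ∀ x ∈ s, m ≤ derivWithin h s x)
    (hK : 0 ≤ K) (hα : 0 ≤ α)
    (hhol : ∀ x ∈ s, ∀ y ∈ s, |derivWithin h s x - derivWithin h s y| ≤ K * |x - y| ^ α)
    {a b : ℝ} (hab : a < b) (hsub : Icc a b ⊆ s) :
    |xiOn h s a b| ≤ 2 * K / m * (b - a) ^ α := by
  obtain ⟨c, hc, hslope⟩ := exists_derivWithin_eq_slope_of_Icc_subset hh hab hsub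
  have hcs : c ∈ s := hsub (Ioo_subset_Icc_self hc)
  have hclose : ∀ x ∈ Icc a b,
      |log (derivWithin h s x) - log (derivWithin h s c)| ≤ K * (b - a) ^ α / m := by
    intro x hx
    have hxc : |x - c| ≤ b - a :=
      abs_sub_le_iff.mpr ⟨by linarith [hx.2, hc.1], by linarith [hx.1, hc.2]⟩
    calc _ ≤ |derivWithin h s x - derivWithin h s c| / m :=
          abs_log_sub_log_le_div hm (hmin x (hsub hx)) (hmin c hcs)
      _ ≤ K * (b - a) ^ α / m := by
          gcongr
          exact (hhol x (hsub hx) c hcs).trans (by gcongr)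
  have hxi : xiOn h s a b = (log (derivWithin h s a) - log (derivWithin h s c)) +
      (log (derivWithin h s b) - log (derivWithin h s c)) := by
    rw [xiOn, ← hslope]
    ring
  calc |xiOn h s a b| ≤ K * (b - a) ^ α / m + K * (b - a) ^ α / m := by
        rw [hxi]
        exact (abs_add_le _ _).trans
          (add_le_add (hclose a (left_mem_Icc.2 hab.le)) (hclose b (right_mem_Icc.2 hab.le)))
    _ = 2 * K / m * (b - a) ^ α := by ring

theorem IsCompact.exists_abs_sub_sub_mul_le {s : Set ℝ} (hs : IsCompact s) (hconv : Convex ℝ s)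
    (hs' : UniqueDiffOn ℝ s) {F : ℝ → ℝ} (hF : ContDiffOn ℝ 1 F s) {ε : ℝ} (hε : 0 < ε) :
    ∃ δ > 0, ∀ x ∈ s, ∀ y ∈ s, |y - x| ≤ δ →
      |F y - F x - derivWithin F s x * (y - x)| ≤ ε * |y - x| := by
  obtain ⟨δ, hδ, hclose⟩ := Metric.uniformContinuousOn_iff_le.mp
    (hs.uniformContinuousOn_of_continuous (hF.continuousOn_derivWithin hs' le_rfl)) ε hε
  refine ⟨δ, hδ, fun x hx y hy hxy => ?_⟩
  set F' := derivWithin F s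
  have hseg : uIcc x y ⊆ s := hconv.ordConnected.uIcc_subset hx hy
  have hderiv : ∀ z ∈ uIcc x y,
      HasDerivWithinAt (fun z => F z - z * F' x) (F' z - F' x) (uIcc x y) z := fun z hz =>
    ((hF.differentiableOn one_ne_zero z (hseg hz)).hasDerivWithinAt.mono hseg).sub
      (hasDerivAt_mul_const (F' x)).hasDerivWithinAt
  have hbound : ∀ z ∈ uIcc x y, ‖F' z - F' x‖ ≤ ε := fun z hz =>
    hclose z (hseg hz) x hx ((abs_sub_left_of_mem_uIcc hz).trans hxy)
  have := (convex_uIcc x y).norm_image_sub_le_of_norm_hasDerivWithin_le hderiv hbound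
    left_mem_uIcc right_mem_uIcc
  rw [Real.norm_eq_abs, Real.norm_eq_abs] at this
  convert this using 2
  ring

theorem abs_sub_sub_mul_midpoint_le {F F' : ℝ → ℝ} {a b c η : ℝ} (hab : a ≤ b)
    (hF : ∀ x ∈ Icc a b, HasDerivWithinAt F (F' x) (Icc a b) x)
    (hF' : ∀ t ∈ Icc a b, |F' t - F' ((a + b) / 2) - c * (t - (a + b) / 2)| ≤ η) :
    |F b - F a - F' ((a + b) / 2) * (b - a)| ≤ η * (b - a) := by
  set m := (a + b) / 2
  have hG : ∀ t ∈ Icc a b, HasDerivWithinAt (fun t => F t - F' m * (t - m) - c / 2 * (t - m) ^ 2)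
      (F' t - F' m - c * (t - m)) (Icc a b) t := fun t ht => by
    have hlin := (hasDerivAt_id' t).sub_const m
    refine (((hF t ht).sub (hlin.const_mul (F' m)).hasDerivWithinAt).sub
      ((hlin.pow 2).const_mul (c / 2)).hasDerivWithinAt).congr_deriv ?_
    ring
  have := (convex_Icc a b).norm_image_sub_le_of_norm_hasDerivWithin_le hG hF'
    (left_mem_Icc.2 hab) (right_mem_Icc.2 hab)
  rw [Real.norm_eq_abs, Real.norm_eq_abs, abs_of_nonneg (sub_nonneg.2 hab)] at this
  -- the quadratic terms cancel because `b - m = m - a`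
  convert this using 2
  ring

theorem abs_xiOn_le_of_midpoint_expansions {s : Set ℝ} {h : ℝ → ℝ} {m a b D₁ D₂ η₁ η₂ : ℝ}
    (hh : DifferentiableOn ℝ h s) (hm : 0 < m) (hmin : ∀ x ∈ s, m ≤ derivWithin h s x)
    (hab : a < b) (hsub : Icc a b ⊆ s)
    (hL : ∀ t ∈ Icc a b, |log (derivWithin h s t) - log (derivWithin h s ((a + b) / 2)) -
      D₁ * (t - (a + b) / 2)| ≤ η₁)
    (hT : ∀ t ∈ Icc a b, |derivWithin h s t - derivWithin h s ((a + b) / 2) -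
      D₂ * (t - (a + b) / 2)| ≤ η₂) :
    |xiOn h s a b| ≤ 2 * η₁ + 2 * η₂ / m := by
  set c := (a + b) / 2 with hc_def
  set L := fun x => log (derivWithin h s x)
  set S := (h b - h a) / (b - a) with hS_def
  have hba : 0 < b - a := sub_pos.2 hab
  have ha : a ∈ Icc a b := left_mem_Icc.2 hab.le
  have hb : b ∈ Icc a b := right_mem_Icc.2 hab.le
  have hcurv : |L a + L b - 2 * L c| ≤ 2 * η₁ := by
    have hLa : |L a - L c - D₁ * (a - c)| ≤ η₁ := hL a ha
    have hLb : |L b - L c - D₁ * (b - c)| ≤ η₁ := hL b hb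
    rw [show L a + L b - 2 * L c = (L a - L c - D₁ * (a - c)) + (L b - L c - D₁ * (b - c)) by
      linear_combination (-2 * D₁) * hc_def]
    linarith [abs_add_le (L a - L c - D₁ * (a - c)) (L b - L c - D₁ * (b - c))]
  have hslope : |derivWithin h s c - S| ≤ η₂ := by
    have hmid := abs_sub_sub_mul_midpoint_le hab.le
      (fun x hx => (hh x (hsub hx)).hasDerivWithinAt.mono hsub) hT
    rwa [abs_sub_comm, show S - derivWithin h s c =
        (h b - h a - derivWithin h s c * (b - a)) / (b - a) by rw [hS_def]; field_simp,
      abs_div, abs_of_pos hba, div_le_iff₀ hba]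
  obtain ⟨c', hc', hc'S⟩ := exists_derivWithin_eq_slope_of_Icc_subset hh hab hsub
  have hlogslope : |L c - log S| ≤ η₂ / m :=
    (abs_log_sub_log_le_div hm (hmin c (hsub ⟨by linarith, by linarith⟩))
      ((hmin c' (hsub (Ioo_subset_Icc_self hc'))).trans_eq hc'S)).trans (by gcongr)
  have hxi : xiOn h s a b = (L a + L b - 2 * L c) + 2 * (L c - log S) := by
    simp only [xiOn, L, S]
    ring
  calc |xiOn h s a b| ≤ |L a + L b - 2 * L c| + |2 * (L c - log S)| := hxi ▸ abs_add_le _ _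
    _ = |L a + L b - 2 * L c| + 2 * |L c - log S| := by rw [abs_mul, abs_two]
    _ ≤ 2 * η₁ + 2 * (η₂ / m) := by gcongr
    _ = 2 * η₁ + 2 * η₂ / m := by ring

theorem exists_abs_xiOn_le_mul_of_contDiffOn_two {A B : ℝ} (hAB : A < B) {h : ℝ → ℝ}
    (hh : ContDiffOn ℝ 2 h (Icc A B)) (hpos : ∀ x ∈ Icc A B, 0 < derivWithin h (Icc A B) x)
    {ε : ℝ} (hε : 0 < ε) :
    ∃ δ > 0, ∀ a b : ℝ, a < b → Icc a b ⊆ Icc A B → b - a < δ →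
      |xiOn h (Icc A B) a b| ≤ ε * (b - a) := by
  have hs : UniqueDiffOn ℝ (Icc A B) := uniqueDiffOn_Icc hAB
  have hh' : ContDiffOn ℝ 1 (derivWithin h (Icc A B)) (Icc A B) :=
    hh.derivWithin hs (by norm_num)
  obtain ⟨m, hm, hmin⟩ := isCompact_Icc.exists_forall_le' hh'.continuousOn hpos
  obtain ⟨δ₁, hδ₁, hL⟩ := isCompact_Icc.exists_abs_sub_sub_mul_le (convex_Icc A B) hs
    (hh'.log fun x hx => (hpos x hx).ne') (half_pos hε)
  obtain ⟨δ₂, hδ₂, hT⟩ := isCompact_Icc.exists_abs_sub_sub_mul_le (convex_Icc A B) hs hh'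
    (by positivity : 0 < ε * m / 2)
  refine ⟨min δ₁ δ₂, lt_min hδ₁ hδ₂, fun a b hab hsub hδ => ?_⟩
  have hc : (a + b) / 2 ∈ Icc A B := hsub ⟨by linarith, by linarith⟩
  have hnear : ∀ t ∈ Icc a b, |t - (a + b) / 2| ≤ (b - a) / 2 := fun t ht =>
    abs_sub_le_iff.2 ⟨by linarith [ht.2], by linarith [ht.1]⟩
  have hδ' : ∀ t ∈ Icc a b, |t - (a + b) / 2| ≤ min δ₁ δ₂ := fun t ht =>
    (hnear t ht).trans (by linarith)
  refine (abs_xiOn_le_of_midpoint_expansions (η₁ := ε / 2 * ((b - a) / 2))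
    (η₂ := ε * m / 2 * ((b - a) / 2)) (hh.differentiableOn two_ne_zero) hm hmin hab hsub
    (fun t ht => (hL _ hc t (hsub ht) ((hδ' t ht).trans (min_le_left _ _))).trans
      (by gcongr; exact hnear t ht))
    (fun t ht => (hT _ hc t (hsub ht) ((hδ' t ht).trans (min_le_right _ _))).trans
      (by gcongr; exact hnear t ht))).trans_eq ?_
  field_simp
  ring

/-- **Lemma (cross-ratio distortion of a smooth map).** For `h : [A,B] → ℝ` with positive
derivative: if `h` is `C^{1+α}` then `|ξ_h(J)| = O(|J|^α)`, and if `h` is `C²` then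
`|ξ_h(J)| = o(|J|)` as `|J| → 0`, for closed intervals `J ⊆ [A,B]`. -/
theorem xi_bound_of_smooth (A B : ℝ) (hAB : A < B) (h : ℝ → ℝ)
    (hpos : ∀ x ∈ Set.Icc A B, 0 < derivWithin h (Set.Icc A B) x) :
    (∀ α : ℝ, 0 < α → α ≤ 1 →
      ContDiffOn ℝ 1 h (Set.Icc A B) →
      (∃ K : ℝ, ∀ x ∈ Set.Icc A B, ∀ y ∈ Set.Icc A B,
        |derivWithin h (Set.Icc A B) x - derivWithin h (Set.Icc A B) y| ≤ K * |x - y| ^ α) →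
      ∃ C : ℝ, ∀ a b : ℝ, a < b → Set.Icc a b ⊆ Set.Icc A B →
        |xiOn h (Set.Icc A B) a b| ≤ C * (b - a) ^ α) ∧
    (ContDiffOn ℝ 2 h (Set.Icc A B) →
      ∀ ε : ℝ, 0 < ε → ∃ δ > (0:ℝ), ∀ a b : ℝ, a < b → Set.Icc a b ⊆ Set.Icc A B →
        b - a < δ → |xiOn h (Set.Icc A B) a b| ≤ ε * (b - a)) := by
  refine ⟨fun α hα _ hh ⟨K, hK⟩ => ?_,
    fun hh _ hε => exists_abs_xiOn_le_mul_of_contDiffOn_two hAB hh hpos hε⟩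
  obtain ⟨m, hm, hmin⟩ := isCompact_Icc.exists_forall_le'
    (hh.continuousOn_derivWithin (uniqueDiffOn_Icc hAB) le_rfl) hpos
  have hK' : ∀ x ∈ Icc A B, ∀ y ∈ Icc A B,
      |derivWithin h (Icc A B) x - derivWithin h (Icc A B) y| ≤ max K 0 * |x - y| ^ α :=
    fun x hx y hy => (hK x hx y hy).trans (by gcongr; exact le_max_left K 0)
  exact ⟨2 * max K 0 / m, fun a b hab hsub => abs_xiOn_le_of_holder
    (hh.differentiableOn one_ne_zero) hm hmin (le_max_right K 0) hα.le hK' hab hsub⟩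

end
end

section
/- Let r(c) ∈ (0,1) be a constant (depending only on c) such that for all f ∈ B^{2+}_irr(p,c) and sufficiently large n every Δ_{n−1}^k contains a subarc Δ_n^l with |Δ_n^l| ≥ r(c)|Δ_{n−1}^k|. Then for every γ > 1 − r(c) there exists A = A(c,γ) such that for every f ∈ B^{2+}_irr(p,c) and all sufficiently large n with a_{n+1} ≥ A, each arc Δ_{n−1}^k, 0 ≤ k < q_n, contains a subarc Δ_n^l, 0 ≤ l < q_{n+1}, with |Δ_n^l|/|Δ_{n−1}^k| ≤ γ · μ(Δ_n^l)/μ(Δ_{n−1}^k). -/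
open Set Filter MeasureTheory
open scoped Topology ENNReal NNReal

noncomputable section

/-!
Let `a = a_{n+1}`. The arc `Δ_{n-1}^k` contains the `a` arcs `Δ_n^l` with
`l = k + q_{n-1} + j q_n`, `j < a`, lying end to end. Two arcs `Δ_n^l`, `Δ_n^{l'}` with
`l ≠ l' < q_{n+1}` have disjoint interiors: for an irrational rotation number `ρ` the lifted
orbit of `p` is ordered like the corresponding orbit of the rigid rotation by `ρ`, where an
overlap would give `|(l - l') ρ - b| < |q_n ρ - p_n|`, against best approximation. So the long
arc `Δ_n^{l'}` and the at least `a - 1` arcs of the chain different from it have total length at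
most `|Δ_{n-1}^k|`, and the shortest of the latter has length at most
`(1 - r) |Δ_{n-1}^k| / (a - 1)`. As `μ_n / μ_{n-1} > 1 / (a + 1)`, this is at most
`γ (μ_n / μ_{n-1}) |Δ_{n-1}^k|` once `a` is large.
-/

theorem Irrational.fract_mem_Ioo {y : ℝ} (hy : Irrational y) : Int.fract y ∈ Ioo 0 1 :=
  ⟨(Int.fract_nonneg y).lt_of_ne' fun h => by
    obtain ⟨z, hz⟩ := Int.fract_eq_zero_iff.1 h
    exact hy.ne_int z hz.symm, Int.fract_lt_one y⟩

theorem le_abs_mul_add_mul_of_mul_nonneg {x y q₀ q₁ : ℤ} (hq₀ : 0 ≤ q₀) (hq₁ : 0 ≤ q₁)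
    (hy : y ≠ 0) (hxy : 0 ≤ x * y) : q₁ ≤ |x * q₀ + y * q₁| := by
  rcases hy.lt_or_gt with hy | hy
  · have hx : x ≤ 0 := nonpos_of_mul_nonneg_left hxy hy
    rw [abs_of_nonpos (by nlinarith)]
    nlinarith [mul_nonneg (neg_nonneg.2 hx) hq₀]
  · have hx : 0 ≤ x := nonneg_of_mul_nonneg_left hxy hy
    rw [abs_of_nonneg (by nlinarith)]
    nlinarith [mul_nonneg hx hq₀]

namespace ContFrac

variable {ρ : ℝ}

def theta (ρ : ℝ) (n : ℕ) : ℝ := cfQ ρ n * ρ - cfP ρ n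

theorem cfMu_eq_abs_theta (n : ℕ) : cfMu ρ n = |theta ρ n| := rfl

theorem irrational_gaussIter (hρ : Irrational ρ) : ∀ n, Irrational (gaussIter ρ n)
  | 0 => hρ.sub_intCast _
  | n + 1 => (irrational_gaussIter hρ n).inv.sub_intCast _

theorem gaussIter_mem_Ioo (hρ : Irrational ρ) : ∀ n, gaussIter ρ n ∈ Ioo 0 1
  | 0 => hρ.fract_mem_Ioo
  | n + 1 => (irrational_gaussIter hρ n).inv.fract_mem_Ioo

theorem inv_gaussIter (hρ : Irrational ρ) (n : ℕ) :
    (gaussIter ρ n)⁻¹ = cfA ρ (n + 1) + gaussIter ρ (n + 1) := by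
  have hnn : 0 ≤ (gaussIter ρ n)⁻¹ := inv_nonneg.2 (gaussIter_mem_Ioo hρ n).1.le
  have : (cfA ρ (n + 1) : ℝ) = ⌊(gaussIter ρ n)⁻¹⌋ := by
    rw [cfA, Nat.add_sub_cancel, ← Int.natCast_floor_eq_floor hnn, Int.cast_natCast]
  rw [this, gaussIter, Int.floor_add_fract]

theorem one_le_cfA (hρ : Irrational ρ) (n : ℕ) : 1 ≤ cfA ρ (n + 1) := by
  rw [cfA, Nat.add_sub_cancel, Nat.one_le_floor_iff, one_le_inv₀ (gaussIter_mem_Ioo hρ n).1]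
  exact (gaussIter_mem_Ioo hρ n).2.le

theorem cfQ_pos (hρ : Irrational ρ) : ∀ n, 0 < cfQ ρ n
  | 0 => Nat.one_pos
  | 1 => one_le_cfA hρ 0
  | n + 2 => Nat.add_pos_right _ (cfQ_pos hρ n)

theorem one_div_cfA_add_one_lt_gaussIter (hρ : Irrational ρ) (n : ℕ) :
    1 / (cfA ρ (n + 1) + 1 : ℝ) < gaussIter ρ n := by
  have hx := gaussIter_mem_Ioo hρ n
  have hx' := gaussIter_mem_Ioo hρ (n + 1)
  rw [div_lt_iff₀ (by positivity), ← inv_mul_lt_iff₀ hx.1, inv_gaussIter hρ, mul_one]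
  linarith [hx'.2]

theorem theta_add_two (n : ℕ) :
    theta ρ (n + 2) = cfA ρ (n + 2) * theta ρ (n + 1) + theta ρ n := by
  simp only [theta, cfQ, cfP]
  push_cast
  ring

theorem theta_eq_prod (hρ : Irrational ρ) (n : ℕ) :
    theta ρ n = (-1) ^ n * ∏ i ∈ Finset.range (n + 1), gaussIter ρ i := by
  have hrec : ∀ m,
      gaussIter ρ m * gaussIter ρ (m + 1) = 1 - cfA ρ (m + 1) * gaussIter ρ m := by
    intro m
    have h := mul_inv_cancel₀ (gaussIter_mem_Ioo hρ m).1.ne'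
    rw [inv_gaussIter hρ] at h
    linear_combination h
  have h0 : gaussIter ρ 0 = ρ - ⌊ρ⌋ := rfl
  induction n using Nat.twoStepInduction with
  | zero => simp [theta, cfQ, cfP, h0]
  | one =>
    simp only [theta, cfQ, cfP, Finset.prod_range_succ, Finset.prod_range_zero, h0]
    push_cast
    have h := hrec 0
    rw [h0] at h
    linear_combination h
  | more n ih ih1 =>
    rw [theta_add_two, ih, ih1, Finset.prod_range_succ _ (n + 2),
      Finset.prod_range_succ _ (n + 1)]
    linear_combination
      (-(-1 : ℝ) ^ n * ∏ i ∈ Finset.range (n + 1), gaussIter ρ i) * hrec (n + 1)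

theorem prod_gaussIter_pos (hρ : Irrational ρ) (n : ℕ) :
    0 < ∏ i ∈ Finset.range n, gaussIter ρ i :=
  Finset.prod_pos fun i _ => (gaussIter_mem_Ioo hρ i).1

theorem abs_theta (hρ : Irrational ρ) (n : ℕ) :
    |theta ρ n| = ∏ i ∈ Finset.range (n + 1), gaussIter ρ i := by
  rw [theta_eq_prod hρ, abs_mul, abs_pow, abs_neg, abs_one, one_pow, one_mul,
    abs_of_pos (prod_gaussIter_pos hρ _)]

theorem abs_theta_lt_one (hρ : Irrational ρ) (n : ℕ) : |theta ρ n| < 1 := by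
  rw [abs_theta hρ, Finset.prod_range_succ]
  exact mul_lt_one_of_nonneg_of_lt_one_right
    (Finset.prod_le_one (fun i _ => (gaussIter_mem_Ioo hρ i).1.le)
      fun i _ => (gaussIter_mem_Ioo hρ i).2.le)
    (gaussIter_mem_Ioo hρ n).1.le (gaussIter_mem_Ioo hρ n).2

theorem theta_ne_zero (hρ : Irrational ρ) (n : ℕ) : theta ρ n ≠ 0 :=
  abs_pos.1 (abs_theta hρ n ▸ prod_gaussIter_pos hρ _)

theorem abs_theta_succ (hρ : Irrational ρ) (n : ℕ) :
    |theta ρ (n + 1)| = |theta ρ n| * gaussIter ρ (n + 1) := by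
  rw [abs_theta hρ, abs_theta hρ, Finset.prod_range_succ]

theorem theta_mul_theta_succ_neg (hρ : Irrational ρ) (n : ℕ) :
    theta ρ n * theta ρ (n + 1) < 0 := by
  rw [theta_eq_prod hρ, theta_eq_prod hρ, Finset.prod_range_succ _ (n + 1)]
  have hx := (gaussIter_mem_Ioo hρ (n + 1)).1
  have hP := prod_gaussIter_pos hρ (n + 1)
  set P := ∏ i ∈ Finset.range (n + 1), gaussIter ρ i
  have hsq : ((-1 : ℝ) ^ n) ^ 2 = 1 := by rw [← pow_mul, mul_comm, pow_mul, neg_one_sq, one_pow]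
  have : (-1 : ℝ) ^ n * P * ((-1) ^ (n + 1) * (P * gaussIter ρ (n + 1)))
      = -(((-1) ^ n) ^ 2 * (P * P * gaussIter ρ (n + 1))) := by ring
  rw [this, hsq, one_mul, neg_neg_iff_pos]
  positivity

theorem cfQ_mul_cfP_sub (n : ℕ) :
    (cfQ ρ (n + 1) : ℤ) * cfP ρ n - cfQ ρ n * cfP ρ (n + 1) = (-1) ^ (n + 1) := by
  induction n with
  | zero => simp [cfQ, cfP]
  | succ n ih =>
    simp only [cfQ, cfP]
    push_cast
    linear_combination -ih

theorem abs_theta_le (hρ : Irrational ρ) (n : ℕ) {m : ℤ} (b : ℤ) (hm : m ≠ 0)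
    (hmq : |m| < (cfQ ρ (n + 1) : ℤ)) : |theta ρ n| ≤ |m * ρ - b| := by
  set q₀ : ℤ := (cfQ ρ n : ℤ)
  set q₁ : ℤ := (cfQ ρ (n + 1) : ℤ)
  set p₀ := cfP ρ n
  set p₁ := cfP ρ (n + 1)
  have hdet : (q₁ * p₀ - q₀ * p₁) ^ 2 = 1 := by
    rw [cfQ_mul_cfP_sub, ← pow_mul, mul_comm, pow_mul, neg_one_sq, one_pow]
  -- `(m, b) = μ (q_n, p_n) + ν (q_{n+1}, p_{n+1})` with `μ ≠ 0` and `μ ν ≤ 0`, so the two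
  -- terms of `m ρ - b = μ θ_n + ν θ_{n+1}` have the same sign
  set μ := (m * p₁ - b * q₁) * (q₀ * p₁ - q₁ * p₀)
  set ν := (b * q₀ - m * p₀) * (q₀ * p₁ - q₁ * p₀)
  have hm_eq : m = μ * q₀ + ν * q₁ := by linear_combination -m * hdet
  have hb_eq : b = μ * p₀ + ν * p₁ := by linear_combination -b * hdet
  have hsum : (m * ρ - b : ℝ) = μ * theta ρ n + ν * theta ρ (n + 1) := by
    have hm' : (m : ℝ) = μ * q₀ + ν * q₁ := by exact_mod_cast hm_eq
    have hb' : (b : ℝ) = μ * p₀ + ν * p₁ := by exact_mod_cast hb_eq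
    rw [hm', hb']
    simp only [theta, q₀, q₁, p₀, p₁]
    push_cast
    ring
  have hq₀ : 0 ≤ q₀ := by positivity
  have hq₁ : 0 ≤ q₁ := by positivity
  have hmq' : |μ * q₀ + ν * q₁| < q₁ := by rwa [hm_eq] at hmq
  have hμ : μ ≠ 0 := fun hμ => by
    have hν : ν ≠ 0 := fun hν => hm (by rw [hm_eq, hμ, hν]; ring)
    exact (le_abs_mul_add_mul_of_mul_nonneg hq₀ hq₁ hν (by rw [hμ, zero_mul])).not_gt hmq'
  have hμν : μ * ν ≤ 0 := by
    by_contra! h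
    exact (le_abs_mul_add_mul_of_mul_nonneg hq₀ hq₁ (right_ne_zero_of_mul h.ne') h.le).not_gt
      hmq'
  have hsame_sign : 0 ≤ (μ * theta ρ n) * (ν * theta ρ (n + 1)) := by
    have : (μ : ℝ) * ν ≤ 0 := by exact_mod_cast hμν
    nlinarith [theta_mul_theta_succ_neg hρ n]
  have hμ1 : (1 : ℝ) ≤ |(μ : ℝ)| := by exact_mod_cast Int.one_le_abs hμ
  calc |theta ρ n| ≤ |(μ : ℝ)| * |theta ρ n| := le_mul_of_one_le_left (abs_nonneg _) hμ1
    _ = |μ * theta ρ n| := (abs_mul _ _).symm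
    _ ≤ |m * ρ - b| := by rw [hsum]; exact sq_le_sq.1 (by nlinarith)

theorem cfMu_succ_div_cfMu (hρ : Irrational ρ) (n : ℕ) :
    cfMu ρ (n + 1) / cfMu ρ n = gaussIter ρ (n + 1) := by
  rw [cfMu_eq_abs_theta, cfMu_eq_abs_theta, abs_theta_succ hρ,
    mul_div_cancel_left₀ _ (abs_ne_zero.2 (theta_ne_zero hρ n))]

end ContFrac

namespace CircleDeg1Lift

theorem add_int_lt_iff_of_irrational {g : CircleDeg1Lift} (hg : Irrational g.translationNumber)
    (x : ℝ) (b : ℤ) : x + b < g x ↔ (b : ℝ) < g.translationNumber :=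
  ⟨fun h => (g.le_translationNumber_of_add_int_le h.le).lt_of_ne (hg.ne_int b).symm,
    fun h => g.lt_map_of_int_lt_translationNumber h x⟩

theorem lt_add_int_iff_of_irrational {g : CircleDeg1Lift} (hg : Irrational g.translationNumber)
    (x : ℝ) (b : ℤ) : g x < x + b ↔ g.translationNumber < b :=
  ⟨fun h => (g.translationNumber_le_of_le_add_int h.le).lt_of_ne (hg.ne_int b),
    fun h => g.map_lt_of_translationNumber_lt_int h x⟩

variable {f : CircleDeg1Lift}

theorem irrational_translationNumber_pow (hf : Irrational (rot f)) {m : ℕ} (hm : m ≠ 0) :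
    Irrational (f ^ m).translationNumber := by
  rw [translationNumber_pow]
  exact hf.natCast_mul hm

theorem pow_add_apply (i j : ℕ) (x : ℝ) : (f ^ (i + j)) x = (f ^ i) ((f ^ j) x) := by
  rw [pow_add, mul_apply]

theorem pow_apply_sub_lt_pow_apply_sub_iff (hf : Irrational (rot f)) (x : ℝ) {i j : ℕ}
    (b c : ℤ) : (f ^ i) x - b < (f ^ j) x - c ↔ i * rot f - b < j * rot f - c := by
  rcases lt_trichotomy i j with hij | rfl | hij
  · obtain ⟨m, rfl⟩ := Nat.exists_eq_add_of_lt hij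
    rw [add_assoc, add_comm i, pow_add_apply]
    have h := add_int_lt_iff_of_irrational
      (irrational_translationNumber_pow hf (Nat.add_one_ne_zero m)) ((f ^ i) x) (c - b)
    rw [translationNumber_pow] at h
    unfold rot
    push_cast at h ⊢
    exact ⟨fun h' => by linarith [h.1 (by linarith)], fun h' => by linarith [h.2 (by linarith)]⟩
  · simp only [sub_lt_sub_iff_left, Int.cast_lt]
  · obtain ⟨m, rfl⟩ := Nat.exists_eq_add_of_lt hij
    rw [add_assoc, add_comm j, pow_add_apply]
    have h := lt_add_int_iff_of_irrational
      (irrational_translationNumber_pow hf (Nat.add_one_ne_zero m)) ((f ^ j) x) (b - c)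
    rw [translationNumber_pow] at h
    unfold rot
    push_cast at h ⊢
    exact ⟨fun h' => by linarith [h.1 (by linarith)], fun h' => by linarith [h.2 (by linarith)]⟩

end CircleDeg1Lift

section OrderTransfer

variable {ι α β : Type*} [LinearOrder α] [LinearOrder β] {g : ι → α} {h : ι → β}

theorem mem_uIcc_iff_of_le_iff (hgh : ∀ c d, g c ≤ g d ↔ h c ≤ h d) (a b c : ι) :
    g a ∈ uIcc (g b) (g c) ↔ h a ∈ uIcc (h b) (h c) := by
  simp only [mem_uIcc, hgh]

theorem uIcc_subset_uIcc_iff_of_le_iff (hgh : ∀ c d, g c ≤ g d ↔ h c ≤ h d) (a b c d : ι) :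
    uIcc (g a) (g b) ⊆ uIcc (g c) (g d) ↔ uIcc (h a) (h b) ⊆ uIcc (h c) (h d) := by
  simp only [uIcc_subset_uIcc_iff_mem, mem_uIcc_iff_of_le_iff hgh]

theorem disjoint_uIoo_iff_of_le_iff [DenselyOrdered α] [DenselyOrdered β]
    (hgh : ∀ c d, g c ≤ g d ↔ h c ≤ h d) (a b c d : ι) :
    Disjoint (uIoo (g a) (g b)) (uIoo (g c) (g d)) ↔
      Disjoint (uIoo (h a) (h b)) (uIoo (h c) (h d)) := by
  simp only [uIoo, Ioo_disjoint_Ioo, min_le_iff, le_max_iff, sup_le_iff, le_inf_iff, hgh]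

end OrderTransfer

theorem disjoint_uIoo_add_of_abs_le {u v θ : ℝ} (h : |θ| ≤ |u - v|) :
    Disjoint (uIoo u (u + θ)) (uIoo v (v + θ)) := by
  rw [Set.disjoint_left]
  rintro z ⟨h1, h2⟩ ⟨h3, h4⟩
  rcases le_total 0 θ with hθ | hθ
  · simp only [inf_of_le_left, sup_of_le_right, le_add_of_nonneg_right hθ] at h1 h2 h3 h4
    rw [abs_of_nonneg hθ] at h
    cases abs_cases (u - v) <;> linarith
  · simp only [inf_of_le_right, sup_of_le_left, add_le_of_nonpos_right hθ] at h1 h2 h3 h4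
    rw [abs_of_nonpos hθ] at h
    cases abs_cases (u - v) <;> linarith

theorem add_add_mul_mem_uIcc {u x y : ℝ} {a i : ℕ} (hi : i ≤ a) (hxy : x * y < 0)
    (hya : y * (a * y + x) < 0) : u + x + i * y ∈ uIcc u (u + x) := by
  have hi' : (i : ℝ) ≤ a := by exact_mod_cast hi
  have hi0 : (0 : ℝ) ≤ i := i.cast_nonneg
  rw [mem_uIcc]
  rcases lt_or_gt_of_ne (left_ne_zero_of_mul hxy.ne) with hx | hx
  · have hy : 0 < y := pos_of_mul_neg_right hxy hx.le
    have hend : a * y + x < 0 := neg_of_mul_neg_right hya hy.le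
    right
    constructor <;> nlinarith [mul_nonneg (sub_nonneg.2 hi') hy.le]
  · have hy : y < 0 := neg_of_mul_neg_right hxy hx.le
    have hend : 0 < a * y + x := pos_of_mul_neg_right hya hy.le
    left
    constructor <;> nlinarith [mul_nonpos_of_nonneg_of_nonpos (sub_nonneg.2 hi') hy.le]

theorem sum_abs_sub_le_of_pairwiseDisjoint {ι : Type*} {s : Finset ι} {a b : ι → ℝ}
    {A B : ℝ}
    (hsub : ∀ i ∈ s, uIcc (a i) (b i) ⊆ uIcc A B)
    (hdisj : (s : Set ι).PairwiseDisjoint fun i => uIoo (a i) (b i)) :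
    ∑ i ∈ s, |b i - a i| ≤ |B - A| := by
  have hvol : ∀ i, volume (uIoo (a i) (b i)) = ENNReal.ofReal |b i - a i| := fun i => by
    rw [uIoo, Real.volume_Ioo, abs_sub_comm, ← max_sub_min_eq_abs']
  have hle : volume (⋃ i ∈ s, uIoo (a i) (b i)) ≤ volume (uIcc A B) :=
    measure_mono (iUnion₂_subset fun i hi => uIoo_subset_uIcc_self.trans (hsub i hi))
  rw [measure_biUnion_finset hdisj (fun i _ => measurableSet_Ioo), Real.volume_interval] at hle
  simp_rw [hvol] at hle
  rw [← ENNReal.ofReal_sum_of_nonneg (fun i _ => abs_nonneg _)] at hle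
  exact (ENNReal.ofReal_le_ofReal_iff (abs_nonneg _)).1 hle

theorem circProj_eq_circProj_iff {x y : ℝ} :
    circProj x = circProj y ↔ ∃ t : ℤ, y = x + t := by
  simp only [circProj, QuotientAddGroup.eq, AddSubgroup.mem_zmultiples_iff, zsmul_eq_mul, mul_one]
  exact ⟨fun ⟨t, ht⟩ => ⟨t, by linarith⟩, fun ⟨t, ht⟩ => ⟨t, by linarith⟩⟩

theorem add_int_notMem_Icc {A B ζ : ℝ} (hB : B < ζ) (hA : ζ < A + 1) (m : ℤ) :
    ζ + m ∉ Icc A B := by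
  rintro ⟨h1, h2⟩
  rcases le_or_gt 0 m with hm | hm
  · have : (0 : ℝ) ≤ m := by exact_mod_cast hm
    linarith
  · have : (m : ℝ) ≤ -1 := by exact_mod_cast Int.le_sub_one_of_lt hm
    linarith

theorem exists_Icc_sub_subset_of_image_subset {α β A B : ℝ} (hAB : B < A + 1)
    (hαβ : α ≤ β) (h : circProj '' Icc α β ⊆ circProj '' Icc A B) :
    ∃ t : ℤ, Icc (α - t) (β - t) ⊆ Icc A B := by
  have lift : ∀ z ∈ Icc α β, ∃ t : ℤ, z - t ∈ Icc A B := fun z hz => by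
    obtain ⟨w, hw, hwz⟩ := h ⟨z, hz, rfl⟩
    obtain ⟨t, rfl⟩ := circProj_eq_circProj_iff.1 hwz.symm
    exact ⟨-t, by simpa [sub_eq_add_neg] using hw⟩
  obtain ⟨t, hA, hB⟩ := lift α (left_mem_Icc.2 hαβ)
  refine ⟨t, Icc_subset_Icc hA ?_⟩
  by_contra! hβ
  -- a point `ζ` of the gap `(B, A + 1)` lies in `Icc α β - t`, but no integer translate of it
  -- lies in `Icc A B`
  obtain ⟨ζ, hζB, hζA, hζβ⟩ : ∃ ζ, B < ζ ∧ ζ < A + 1 ∧ ζ ≤ β - t :=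
    ⟨(B + min (A + 1) (β - t)) / 2, by linarith [lt_min hAB hβ],
      by linarith [lt_min hAB hβ, min_le_left (A + 1) (β - t)],
      by linarith [lt_min hAB hβ, min_le_right (A + 1) (β - t)]⟩
  obtain ⟨s, hs⟩ := lift (ζ + t) ⟨by linarith, by linarith⟩
  refine add_int_notMem_Icc hζB hζA (t - s) ?_
  convert hs using 1
  push_cast
  ring

theorem exists_uIcc_sub_subset_of_arcSubset {α β A B : ℝ} (hAB : |B - A| < 1)
    (h : arcSubset (uIcc α β) (uIcc A B)) : ∃ t : ℤ, uIcc (α - t) (β - t) ⊆ uIcc A B := by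
  have hlen : A ⊔ B < A ⊓ B + 1 := by
    linarith [max_sub_min_eq_abs' A B, abs_sub_comm A B]
  obtain ⟨t, ht⟩ := exists_Icc_sub_subset_of_image_subset hlen inf_le_sup h
  exact ⟨t, by simpa only [uIcc, min_sub_sub_right, max_sub_sub_right] using ht⟩

theorem arcSubset_of_image_sub_subset {A B : Set ℝ} (t : ℤ) (h : (· - (t : ℝ)) '' A ⊆ B) :
    arcSubset A B := by
  rintro _ ⟨z, hz, rfl⟩
  exact ⟨z - t, h ⟨z, hz, rfl⟩, circProj_eq_circProj_iff.2 ⟨t, by ring⟩⟩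

section Orbit

/-- Points `f^i(x) - b` of the lifted orbit of `x`, coded by `(i, b)`. For an irrational rotation
number they are ordered like the points `rotPt (rot f) (i, b) = i ρ - b` of the rigid rotation
(`orbitPt_le_orbitPt_iff`). -/
def orbitPt (f : CircleDeg1Lift) (x : ℝ) (c : ℕ × ℤ) : ℝ := (f ^ c.1) x - c.2

def rotPt (ρ : ℝ) (c : ℕ × ℤ) : ℝ := c.1 * ρ - c.2

/-- The code of the endpoint `f^{l+q_n}(x) - p_n - t` of the lifted arc `Δ_n^l - t`; its other
endpoint `f^l(x) - t` has code `(l, t)`. -/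
def arcEnd (ρ : ℝ) (n l : ℕ) (t : ℤ) : ℕ × ℤ := (l + cfQ ρ n, cfP ρ n + t)

theorem rotPt_arcEnd (ρ : ℝ) (n l : ℕ) (t : ℤ) :
    rotPt ρ (arcEnd ρ n l t) = rotPt ρ (l, t) + ContFrac.theta ρ n := by
  simp only [rotPt, arcEnd, ContFrac.theta]
  push_cast
  ring

variable {f : CircleDeg1Lift}

theorem orbitPt_le_orbitPt_iff (hf : Irrational (rot f)) (x : ℝ) (c d : ℕ × ℤ) :
    orbitPt f x c ≤ orbitPt f x d ↔ rotPt (rot f) c ≤ rotPt (rot f) d := by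
  simpa only [orbitPt, rotPt, not_lt] using
    (CircleDeg1Lift.pow_apply_sub_lt_pow_apply_sub_iff hf x d.2 c.2).not

theorem disjoint_uIoo_arcs (hf : Irrational (rot f)) (x : ℝ) {n l l' : ℕ}
    (hl : l < cfQ (rot f) (n + 1)) (hl' : l' < cfQ (rot f) (n + 1)) (hne : l ≠ l') (t t' : ℤ) :
    Disjoint (uIoo (orbitPt f x (l, t)) (orbitPt f x (arcEnd (rot f) n l t)))
      (uIoo (orbitPt f x (l', t')) (orbitPt f x (arcEnd (rot f) n l' t'))) := by
  rw [disjoint_uIoo_iff_of_le_iff (orbitPt_le_orbitPt_iff hf x), rotPt_arcEnd, rotPt_arcEnd]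
  refine disjoint_uIoo_add_of_abs_le ?_
  have hdiff : rotPt (rot f) (l, t) - rotPt (rot f) (l', t') =
      ((l - l' : ℤ) : ℝ) * rot f - (t - t' : ℤ) := by
    simp only [rotPt]; push_cast; ring
  rw [hdiff]
  exact ContFrac.abs_theta_le hf n _ (sub_ne_zero.2 (by exact_mod_cast hne)) (by rw [abs_lt]; omega)

theorem pow_apply_dynEnd (p : ℝ) (n l : ℕ) :
    (f ^ l) (dynEnd f p n) = orbitPt f p (arcEnd (rot f) n l 0) := by
  rw [dynEnd, CircleDeg1Lift.map_sub_int, ← CircleDeg1Lift.pow_add_apply]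
  simp [orbitPt, arcEnd]

theorem dynArc_eq_uIcc (hcont : Continuous f) (p : ℝ) (n l : ℕ) :
    dynArc f p n l = uIcc (orbitPt f p (l, 0)) (orbitPt f p (arcEnd (rot f) n l 0)) := by
  have hcont' : Continuous (f ^ l) := by rw [CircleDeg1Lift.coe_pow]; exact hcont.iterate l
  rw [dynArc, hcont'.continuousOn.image_uIcc_of_monotoneOn ((f ^ l).monotone.monotoneOn _),
    pow_apply_dynEnd]
  simp [orbitPt]

theorem orbitPt_sub_intCast (x : ℝ) (c : ℕ × ℤ) (t : ℤ) :
    orbitPt f x c - t = orbitPt f x (c.1, c.2 + t) := by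
  simp only [orbitPt]; push_cast; ring

theorem orbitPt_arcEnd_sub_intCast (x : ℝ) (n l : ℕ) (t : ℤ) :
    orbitPt f x (arcEnd (rot f) n l 0) - t = orbitPt f x (arcEnd (rot f) n l t) := by
  simp only [orbitPt, arcEnd]; push_cast; ring

theorem dynLen_eq (p : ℝ) (n l : ℕ) (t : ℤ) :
    dynLen f p n l = |orbitPt f p (arcEnd (rot f) n l t) - orbitPt f p (l, t)| := by
  rw [dynLen, pow_apply_dynEnd, ← orbitPt_arcEnd_sub_intCast _ _ _ t]
  simp only [orbitPt]
  congr 1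
  ring

theorem orbitPt_lt_orbitPt_iff (hf : Irrational (rot f)) (x : ℝ) (c d : ℕ × ℤ) :
    orbitPt f x c < orbitPt f x d ↔ rotPt (rot f) c < rotPt (rot f) d := by
  simpa only [not_le] using (orbitPt_le_orbitPt_iff hf x d c).not

theorem abs_orbitPt_arcEnd_sub_lt_one (hf : Irrational (rot f)) (x : ℝ) (n l : ℕ) (t : ℤ) :
    |orbitPt f x (arcEnd (rot f) n l t) - orbitPt f x (l, t)| < 1 := by
  have hθ := abs_lt.1 (ContFrac.abs_theta_lt_one hf n)
  have h1 : orbitPt f x (l, t + 1) < orbitPt f x (arcEnd (rot f) n l t) := by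
    rw [orbitPt_lt_orbitPt_iff hf, rotPt_arcEnd]
    simp only [rotPt]; push_cast; linarith
  have h2 : orbitPt f x (arcEnd (rot f) n l t) < orbitPt f x (l, t - 1) := by
    rw [orbitPt_lt_orbitPt_iff hf, rotPt_arcEnd]
    simp only [rotPt]; push_cast; linarith
  simp only [orbitPt] at h1 h2 ⊢
  push_cast at h1 h2
  rw [abs_lt]
  constructor <;> linarith

theorem sum_dynLen_le (hf : Irrational (rot f)) (p : ℝ) {n : ℕ} {s : Finset (ℕ × ℤ)}
    {A B : ℝ} (hinj : Set.InjOn Prod.fst (s : Set (ℕ × ℤ)))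
    (hlt : ∀ c ∈ s, c.1 < cfQ (rot f) (n + 1))
    (hsub : ∀ c ∈ s, uIcc (orbitPt f p c) (orbitPt f p (arcEnd (rot f) n c.1 c.2)) ⊆
      uIcc A B) :
    ∑ c ∈ s, dynLen f p n c.1 ≤ |B - A| := by
  simp only [fun c : ℕ × ℤ => dynLen_eq (f := f) p n c.1 c.2]
  refine sum_abs_sub_le_of_pairwiseDisjoint hsub fun c hc d hd hcd => ?_
  exact disjoint_uIoo_arcs hf p (hlt c hc) (hlt d hd) (fun h => hcd (hinj hc hd h)) c.2 d.2

/-- For `j < a_{m+2}` the lifted arcs `Δ_{m+1}^l - t`, `(l, t) = chainCode ρ m k j`, lie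
one after another inside the lift `[f^k(x), f^{k+q_m}(x) - p_m]` of `Δ_m^k`
(`uIcc_chainCode_subset`). -/
def chainCode (ρ : ℝ) (m k j : ℕ) : ℕ × ℤ :=
  (k + cfQ ρ m + j * cfQ ρ (m + 1), cfP ρ m + j * cfP ρ (m + 1))

theorem arcEnd_chainCode (ρ : ℝ) (m k j : ℕ) :
    arcEnd ρ (m + 1) (chainCode ρ m k j).1 (chainCode ρ m k j).2 = chainCode ρ m k (j + 1) := by
  simp only [arcEnd, chainCode, Prod.mk.injEq]
  push_cast
  constructor <;> ring

theorem rotPt_chainCode (ρ : ℝ) (m k j : ℕ) :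
    rotPt ρ (chainCode ρ m k j) =
      rotPt ρ (k, 0) + ContFrac.theta ρ m + j * ContFrac.theta ρ (m + 1) := by
  simp only [rotPt, chainCode, ContFrac.theta]
  push_cast
  ring

theorem uIcc_chainCode_subset (hf : Irrational (rot f)) (x : ℝ) {m k j : ℕ}
    (hj : j < cfA (rot f) (m + 2)) :
    uIcc (orbitPt f x (chainCode (rot f) m k j))
        (orbitPt f x (arcEnd (rot f) (m + 1) (chainCode (rot f) m k j).1
          (chainCode (rot f) m k j).2)) ⊆
      uIcc (orbitPt f x (k, 0)) (orbitPt f x (arcEnd (rot f) m k 0)) := by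
  rw [arcEnd_chainCode, uIcc_subset_uIcc_iff_of_le_iff (orbitPt_le_orbitPt_iff hf x),
    rotPt_chainCode, rotPt_chainCode, rotPt_arcEnd]
  have hxy := ContFrac.theta_mul_theta_succ_neg hf m
  have hya := ContFrac.theta_mul_theta_succ_neg hf (m + 1)
  rw [ContFrac.theta_add_two] at hya
  exact uIcc_subset_uIcc (add_add_mul_mem_uIcc hj.le hxy hya) (add_add_mul_mem_uIcc hj hxy hya)

theorem chainCode_fst_lt {ρ : ℝ} {m k j : ℕ} (hk : k < cfQ ρ (m + 1))
    (hj : j < cfA ρ (m + 2)) :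
    (chainCode ρ m k j).1 < cfQ ρ (m + 2) := by
  have : (j + 1) * cfQ ρ (m + 1) ≤ cfA ρ (m + 2) * cfQ ρ (m + 1) := Nat.mul_le_mul_right _ hj
  simp only [chainCode, cfQ]
  linarith

theorem chainCode_fst_injective {ρ : ℝ} {m : ℕ} (hq : 0 < cfQ ρ (m + 1)) (k : ℕ) :
    Function.Injective fun j => (chainCode ρ m k j).1 := fun i j h => by
  simpa [chainCode, hq.ne'] using h

theorem card_filter_chainCode_ne {ρ : ℝ} {m : ℕ} (hq : 0 < cfQ ρ (m + 1)) (k a l : ℕ) :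
    a - 1 ≤ ((Finset.range a).filter fun j => (chainCode ρ m k j).1 ≠ l).card := by
  have hle : ((Finset.range a).filter fun j => ¬(chainCode ρ m k j).1 ≠ l).card ≤ 1 :=
    Finset.card_le_one.2 fun i hi j hj => chainCode_fst_injective hq k <| by
      simp only [Finset.mem_filter, not_not] at hi hj
      exact hi.2.trans hj.2.symm
  have := Finset.card_filter_add_card_filter_not (s := Finset.range a)
    (p := fun j => (chainCode ρ m k j).1 ≠ l)
  rw [Finset.card_range] at this
  omega

theorem dynLen_add_sum_chainCode_le (hf : Irrational (rot f)) (p : ℝ) {m k l' : ℕ} {t : ℤ}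
    (hk : k < cfQ (rot f) (m + 1)) (hl' : l' < cfQ (rot f) (m + 2))
    (ht : uIcc (orbitPt f p (l', t)) (orbitPt f p (arcEnd (rot f) (m + 1) l' t)) ⊆
      uIcc (orbitPt f p (k, 0)) (orbitPt f p (arcEnd (rot f) m k 0))) :
    dynLen f p (m + 1) l' +
        ∑ j ∈ (Finset.range (cfA (rot f) (m + 2))).filter
            (fun j => (chainCode (rot f) m k j).1 ≠ l'),
          dynLen f p (m + 1) (chainCode (rot f) m k j).1 ≤
      dynLen f p m k := by
  set code := chainCode (rot f) m k
  set S := (Finset.range (cfA (rot f) (m + 2))).filter fun j => (code j).1 ≠ l'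
  have hS : ∀ j ∈ S, j < cfA (rot f) (m + 2) ∧ (code j).1 ≠ l' := by simp [S]
  have hcode := chainCode_fst_injective (ContFrac.cfQ_pos hf (m + 1)) k
  have hnotMem : (l', t) ∉ S.image code := by
    simp only [Finset.mem_image, not_exists, not_and]
    exact fun j hj h => (hS j hj).2 (by rw [h])
  set s : Finset (ℕ × ℤ) := insert (l', t) (S.image code)
  have hinj : Set.InjOn Prod.fst (s : Set (ℕ × ℤ)) := by
    rw [Finset.coe_insert, Set.injOn_insert (by exact_mod_cast hnotMem), Finset.coe_image,
      Set.image_image]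
    refine ⟨hcode.injOn.image_of_comp, ?_⟩
    rintro ⟨j, hj, hjl⟩
    exact (hS j hj).2 hjl
  have hlt : ∀ c ∈ s, c.1 < cfQ (rot f) (m + 2) := by
    simp only [s, Finset.forall_mem_insert, Finset.forall_mem_image]
    exact ⟨hl', fun j hj => chainCode_fst_lt hk (hS j hj).1⟩
  have hsub : ∀ c ∈ s, uIcc (orbitPt f p c) (orbitPt f p (arcEnd (rot f) (m + 1) c.1 c.2)) ⊆
      uIcc (orbitPt f p (k, 0)) (orbitPt f p (arcEnd (rot f) m k 0)) := by
    simp only [s, Finset.forall_mem_insert, Finset.forall_mem_image]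
    exact ⟨ht, fun j hj => uIcc_chainCode_subset hf p (hS j hj).1⟩
  have hsum := sum_dynLen_le hf p hinj hlt hsub
  rwa [Finset.sum_insert hnotMem, Finset.sum_image fun i _ j _ h => hcode (congrArg Prod.fst h),
    ← dynLen_eq p m k 0] at hsum

theorem exists_short_arc_of_long_arc (hcont : Continuous f) (hf : Irrational (rot f)) (p : ℝ)
    {m k l' : ℕ} (hk : k < cfQ (rot f) (m + 1)) (ha : 2 ≤ cfA (rot f) (m + 2))
    (hl' : l' < cfQ (rot f) (m + 2)) (hsub : arcSubset (dynArc f p (m + 1) l') (dynArc f p m k)) :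
    ∃ l < cfQ (rot f) (m + 2), arcSubset (dynArc f p (m + 1) l) (dynArc f p m k) ∧
      (cfA (rot f) (m + 2) - 1 : ℝ) * dynLen f p (m + 1) l + dynLen f p (m + 1) l' ≤
        dynLen f p m k := by
  set a := cfA (rot f) (m + 2)
  set code := chainCode (rot f) m k
  simp only [dynArc_eq_uIcc hcont] at hsub ⊢
  obtain ⟨t, ht⟩ :=
    exists_uIcc_sub_subset_of_arcSubset (abs_orbitPt_arcEnd_sub_lt_one hf p m k 0) hsub
  rw [orbitPt_sub_intCast, orbitPt_arcEnd_sub_intCast, zero_add] at ht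
  set S := (Finset.range a).filter fun j => (code j).1 ≠ l'
  have hcard : a - 1 ≤ S.card := card_filter_chainCode_ne (ContFrac.cfQ_pos hf (m + 1)) k a l'
  have hcard' : (a - 1 : ℝ) ≤ S.card := by
    rw [← Nat.cast_one, ← Nat.cast_sub (by omega)]
    exact_mod_cast hcard
  obtain ⟨j₀, hj₀, hmin⟩ := S.exists_min_image (fun j => dynLen f p (m + 1) (code j).1)
    (Finset.card_pos.1 (by omega))
  have hj₀a : j₀ < a := Finset.mem_range.1 (Finset.mem_filter.1 hj₀).1
  refine ⟨(code j₀).1, chainCode_fst_lt hk hj₀a,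
    arcSubset_of_image_sub_subset (code j₀).2 ?_, ?_⟩
  · rw [image_sub_const_uIcc, orbitPt_sub_intCast, orbitPt_arcEnd_sub_intCast, zero_add]
    exact uIcc_chainCode_subset hf p hj₀a
  calc (a - 1 : ℝ) * dynLen f p (m + 1) (code j₀).1 + dynLen f p (m + 1) l'
      ≤ S.card * dynLen f p (m + 1) (code j₀).1 + dynLen f p (m + 1) l' := by
        gcongr
        exact abs_nonneg _
    _ ≤ ∑ j ∈ S, dynLen f p (m + 1) (code j).1 + dynLen f p (m + 1) l' := by
        gcongr
        simpa using S.card_nsmul_le_sum _ _ hmin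
    _ ≤ dynLen f p m k := by linarith [dynLen_add_sum_chainCode_le hf p hk hl' ht]

theorem dynLen_pos (hf : Irrational (rot f)) (p : ℝ) (n l : ℕ) : 0 < dynLen f p n l := by
  rw [dynLen_eq p n l 0, abs_pos, sub_ne_zero]
  intro h
  have h1 := (orbitPt_le_orbitPt_iff hf p _ _).1 h.le
  have h2 := (orbitPt_le_orbitPt_iff hf p _ _).1 h.ge
  rw [rotPt_arcEnd] at h1 h2
  exact ContFrac.theta_ne_zero hf n (by linarith)

end Orbit

theorem div_le_mul_of_mul_add_le {γ r a L L' D X : ℝ} (hγ : 1 - r < γ) (ha : 2 ≤ a)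
    (hA : (γ + (1 - r)) / (γ - (1 - r)) ≤ a) (hsum : (a - 1) * L + L' ≤ D)
    (hlong : r * D ≤ L') (hD : 0 < D) (hL : 0 ≤ L) (hX : 1 / (a + 1) < X) :
    L / D ≤ γ * X := by
  have hr : 0 ≤ 1 - r := by
    by_contra! h
    nlinarith
  have hγa : (1 - r) * (a + 1) ≤ γ * (a - 1) := by
    rw [div_le_iff₀ (by linarith)] at hA
    linarith
  have haL : (a + 1) * L ≤ γ * D := by
    refine le_of_mul_le_mul_left ?_ (by linarith : 0 < a - 1)
    nlinarith
  have hXa : 1 < X * (a + 1) := by rwa [div_lt_iff₀ (by linarith)] at hX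
  have hγD : 0 ≤ γ * D := mul_nonneg (by linarith) hD.le
  rw [div_le_iff₀ hD]
  refine le_of_mul_le_mul_left ?_ (by linarith : 0 < a + 1)
  nlinarith [mul_le_mul_of_nonneg_left hXa.le hγD]

theorem short_subinterval_of_long_general (c : ℝ)
    (r : ℝ)
    (hlong : ∀ (p : ℝ) (f : CircleDeg1Lift),
      BreakClass2Plus f p c → Irrational (rot f) →
      ∃ N : ℕ, 1 ≤ N ∧ ∀ n : ℕ, N ≤ n → ∀ k < cfQ (rot f) n,
        ∃ l < cfQ (rot f) (n+1),
          arcSubset (dynArc f p n l) (dynArc f p (n-1) k) ∧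
          r * dynLen f p (n-1) k ≤ dynLen f p n l) :
    ∀ γ : ℝ, 1 - r < γ →
      ∃ A : ℕ, ∀ (p : ℝ) (f : CircleDeg1Lift),
        BreakClass2Plus f p c → Irrational (rot f) →
        ∃ N : ℕ, 1 ≤ N ∧ ∀ n : ℕ, N ≤ n → A ≤ cfA (rot f) (n+1) →
          ∀ k < cfQ (rot f) n, ∃ l < cfQ (rot f) (n+1),
            arcSubset (dynArc f p n l) (dynArc f p (n-1) k) ∧
            dynLen f p n l / dynLen f p (n-1) k ≤
              γ * (cfMu (rot f) n / cfMu (rot f) (n-1)) := by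
  intro γ hγ
  refine ⟨max 2 ⌈(γ + (1 - r)) / (γ - (1 - r))⌉₊, fun p f hf hρ => ?_⟩
  obtain ⟨N, hN1, hN⟩ := hlong p f hf hρ
  refine ⟨N, hN1, fun n hn ha k hk => ?_⟩
  obtain ⟨m, rfl⟩ : ∃ m, n = m + 1 := ⟨n - 1, by omega⟩
  obtain ⟨l', hl', hsub', hlen'⟩ := hN (m + 1) hn k hk
  rw [Nat.add_sub_cancel] at hsub' hlen' ⊢
  obtain ⟨l, hl, hsub, hsum⟩ :=
    exists_short_arc_of_long_arc hf.1.2.1 hρ p hk (le_of_max_le_left ha) hl' hsub'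
  refine ⟨l, hl, hsub, ?_⟩
  rw [ContFrac.cfMu_succ_div_cfMu hρ]
  exact div_le_mul_of_mul_add_le hγ (by exact_mod_cast le_of_max_le_left ha)
    ((Nat.le_ceil _).trans (by exact_mod_cast le_of_max_le_right ha)) hsum hlen'
    (dynLen_pos hρ p m k) (abs_nonneg _) (ContFrac.one_div_cfA_add_one_lt_gaussIter hρ (m + 1))

/-- **Corollary (definite contraction for large partial quotients).** Suppose `r ∈ (0,1)`
is such that for every `f ∈ B^{2+}_irr(p,c)` and large `n`, each `Δ_{n−1}^k` contains a
subarc `Δ_n^l` with `|Δ_n^l| ≥ r|Δ_{n−1}^k|`. Then for every `γ > 1 − r` there is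
`A = A(c,γ)` such that for every `f ∈ B^{2+}_irr(p,c)` and all large `n` with `a_{n+1} ≥ A`,
each `Δ_{n−1}^k` contains a subarc `Δ_n^l` with
`|Δ_n^l|/|Δ_{n−1}^k| ≤ γ·μ(Δ_n^l)/μ(Δ_{n−1}^k)` (and `μ(Δ_n^l) = μ_n`, `μ(Δ_{n−1}^k) = μ_{n−1}`). -/
theorem short_subinterval_of_long (c : ℝ) (hc : 0 < c) (hc1 : c ≠ 1)
    (r : ℝ) (hr : r ∈ Set.Ioo (0:ℝ) 1)
    (hlong : ∀ (p : ℝ) (f : CircleDeg1Lift),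
      BreakClass2Plus f p c → Irrational (rot f) →
      ∃ N : ℕ, 1 ≤ N ∧ ∀ n : ℕ, N ≤ n → ∀ k < cfQ (rot f) n,
        ∃ l < cfQ (rot f) (n+1),
          arcSubset (dynArc f p n l) (dynArc f p (n-1) k) ∧
          r * dynLen f p (n-1) k ≤ dynLen f p n l) :
    ∀ γ : ℝ, 1 - r < γ →
      ∃ A : ℕ, ∀ (p : ℝ) (f : CircleDeg1Lift),
        BreakClass2Plus f p c → Irrational (rot f) →
        ∃ N : ℕ, 1 ≤ N ∧ ∀ n : ℕ, N ≤ n → A ≤ cfA (rot f) (n+1) →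
          ∀ k < cfQ (rot f) n, ∃ l < cfQ (rot f) (n+1),
            arcSubset (dynArc f p n l) (dynArc f p (n-1) k) ∧
            dynLen f p n l / dynLen f p (n-1) k ≤
              γ * (cfMu (rot f) n / cfMu (rot f) (n-1)) :=
  short_subinterval_of_long_general c r hlong
end
end
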